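/- For an infinite set I the following are equivalent: (i) |I| is less than the first measurable cardinal (i.e., no cardinal ≤ |I| is measurable); (iii) for every non-principal ultrafilter U on I, the ultrapower ∏_U G_ω of the linear graph on ω is disconnected. -/

import Mathlib

/-- Reflexivization of a binary relation. -/
def rRefl {X : Type*} (ρ : X → X → Prop) : X → X → Prop := fun a b => ρ a b ∨ a = b

/-- Signed step: `ρ` for `false`, `ρ⁻¹` for `true` (after reflexivizing). -/
def rStep {X : Type*} (ρ : X → X → Prop) : Bool → X → X → Prop :=
  fun e a b => if e then rRefl ρ b a else rRefl ρ a b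

/-- `(z, ε)` is a path of length `n+1` from `x` to `y`. -/
def pathPts {X : Type*} {n : ℕ} (x y : X) (z : Fin n → X) : Fin (n + 2) → X :=
  Fin.cons x (Fin.snoc z y)

def IsPath {X : Type*} (ρ : X → X → Prop) {n : ℕ} (z : Fin n → X)
    (ε : Fin (n + 1) → Bool) (x y : X) : Prop :=
  ∀ k : Fin (n + 1), rStep ρ (ε k) (pathPts x y z k.castSucc) (pathPts x y z k.succ)

/-- There is a path of length `≤ n+1` from `x` to `y`. -/
def dLE {X : Type*} (ρ : X → X → Prop) (n : ℕ) (x y : X) : Prop :=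
  ∃ m, m ≤ n ∧ ∃ z : Fin m → X, ∃ ε : Fin (m + 1) → Bool, IsPath ρ z ε x y

/-- A binary structure is connected iff any two points are joined by a finite path. -/
def Conn {X : Type*} (ρ : X → X → Prop) : Prop := ∀ x y : X, ∃ n, dLE ρ n x y

/-- The setoid of a reduced product: agreement on a set in the filter. -/
def redSetoid {I : Type*} (Φ : Filter I) (X : I → Type*) : Setoid (∀ i, X i) where
  r x y := {i | x i = y i} ∈ Φ
  iseqv := by
    refine ⟨fun x => ?_, fun h => ?_, fun h1 h2 => ?_⟩
    · simpa using Filter.univ_mem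
    · filter_upwards [h] with i e using e.symm
    · filter_upwards [h1, h2] with i e1 e2 using e1.trans e2

/-- The relation of the reduced product. -/
def redRel {I : Type*} (Φ : Filter I) {X : I → Type*} (ρ : ∀ i, X i → X i → Prop) :
    Quotient (redSetoid Φ X) → Quotient (redSetoid Φ X) → Prop :=
  Quotient.lift₂ (fun x y => {i | ρ i (x i) (y i)} ∈ Φ)
    (by
      intro a b a' b' ha hb
      have ha' : {i | a i = a' i} ∈ Φ := ha
      have hb' : {i | b i = b' i} ∈ Φ := hb
      apply propext
      constructor
      · intro h
        filter_upwards [h, ha', hb'] with i h1 h2 h3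
        rw [← h2, ← h3]; exact h1
      · intro h
        filter_upwards [h, ha', hb'] with i h1 h2 h3
        rw [h2, h3]; exact h1)

/-- The coordinatewise relation of the direct product. -/
def dirRel {I : Type*} {X : I → Type*} (ρ : ∀ i, X i → X i → Prop) :
    (∀ i, X i) → (∀ i, X i) → Prop := fun x y => ∀ i, ρ i (x i) (y i)

/-- A non-principal ultrafilter contains no singleton. -/
def NonPrincipal {I : Type*} (U : Ultrafilter I) : Prop := ∀ a : I, {a} ∉ U

/-- An `ω`-complete (countably complete) ultrafilter. -/
def OmegaComplete {I : Type*} (U : Ultrafilter I) : Prop :=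
  ∀ f : ℕ → Set I, (∀ n, f n ∈ U) → (⋂ n, f n) ∈ U

/-- `|I|` is less than the first measurable cardinal: no subset of `I` carries a
non-principal `ω`-complete ultrafilter. -/
def NoMeasurableLE (I : Type*) : Prop :=
  ∀ J : Set I, ∀ U : Ultrafilter J, ¬ (NonPrincipal U ∧ OmegaComplete U)

/-- The linear graph on `ω`. -/
def linRel : ℕ → ℕ → Prop := fun m n => Nat.dist m n = 1

/-! The ultrapower of the linear graph `ω` along `U` is connected exactly when every function
`I → ℕ` is bounded on a set in `U`: by Łoś, a path of length `n` in the ultrapower is a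
coordinatewise path of length `n` on a set in `U`, and in `ω` such paths join exactly the pairs at
distance at most `n`. Bounding every `ℕ`-valued function is in turn equivalent to countable
completeness of `U`, and a non-principal countably complete ultrafilter on a subset of `I` is the
same as one on `I` itself. -/

open Filter

lemma pathPts_comp {X Y : Type*} (f : X → Y) {n : ℕ} (x y : X) (z : Fin n → X) :
    f ∘ pathPts x y z = pathPts (f x) (f y) (f ∘ z) := by
  simp only [pathPts, Fin.comp_cons, Fin.comp_snoc]

lemma pathPts_zero {X : Type*} {n : ℕ} (x y : X) (z : Fin n → X) : pathPts x y z 0 = x := by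
  simp [pathPts]

lemma pathPts_last {X : Type*} {n : ℕ} (x y : X) (z : Fin n → X) :
    pathPts x y z (Fin.last (n + 1)) = y := by
  rw [pathPts, ← Fin.succ_last, Fin.cons_succ, Fin.snoc_last]

lemma pathPts_of_seq {X : Type*} (g : ℕ → X) (n : ℕ) :
    pathPts (g 0) (g (n + 1)) (fun j : Fin n => g (j + 1)) = fun t : Fin (n + 2) => g t := by
  funext t
  refine Fin.cases (pathPts_zero _ _ _) (fun j => ?_) t
  refine Fin.lastCases ?_ (fun j => ?_) j
  · exact pathPts_last _ _ _
  · simp [pathPts]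

section LinearGraph

lemma natDist_le_one_of_rStep_linRel {e : Bool} {a b : ℕ} (h : rStep linRel e a b) :
    Nat.dist a b ≤ 1 := by
  cases e <;> simp only [rStep, rRefl, linRel, Bool.false_eq_true, if_true, if_false] at h <;>
    rcases h with h | rfl <;> simp_all [Nat.dist_comm]

lemma natDist_le_of_isPath_linRel {m : ℕ} {z : Fin m → ℕ} {ε : Fin (m + 1) → Bool} {a b : ℕ}
    (h : IsPath linRel z ε a b) : Nat.dist a b ≤ m + 1 := by
  suffices hdist : ∀ t : Fin (m + 2), Nat.dist a (pathPts a b z t) ≤ t by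
    simpa [pathPts_last] using hdist (Fin.last (m + 1))
  refine Fin.induction (by simp [pathPts_zero]) (fun k ih => ?_)
  calc Nat.dist a (pathPts a b z k.succ)
      ≤ Nat.dist a (pathPts a b z k.castSucc)
          + Nat.dist (pathPts a b z k.castSucc) (pathPts a b z k.succ) :=
        Nat.dist.triangle_inequality _ _ _
    _ ≤ k + 1 := add_le_add ih (natDist_le_one_of_rStep_linRel (h k))

/-- The point reached from `a` after `t` unit steps towards `b`. -/
def walkTowards (a b t : ℕ) : ℕ := if a ≤ b then min (a + t) b else max b (a - t)

lemma isPath_linRel_walkTowards {n a b : ℕ} (h : Nat.dist a b ≤ n + 1) :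
    IsPath linRel (fun j : Fin n => walkTowards a b (j + 1)) (fun _ => false) a b := by
  have hstart : walkTowards a b 0 = a := by unfold walkTowards; split_ifs <;> omega
  have hend : walkTowards a b (n + 1) = b := by
    unfold Nat.dist at h; unfold walkTowards; split_ifs <;> omega
  have hpts := pathPts_of_seq (walkTowards a b) n
  rw [hstart, hend] at hpts
  intro k
  rw [hpts]
  simp only [rStep, rRefl, linRel, Bool.false_eq_true, if_false, Fin.val_castSucc, Fin.val_succ]
  unfold walkTowards Nat.dist; split_ifs <;> omega

end LinearGraph

section Ultrapower

variable {I : Type*} (U : Ultrafilter I) {X : I → Type*} (ρ : ∀ i, X i → X i → Prop)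

local notation "mk" => Quotient.mk (redSetoid (U : Filter I) X)

lemma rRefl_redRel_mk_iff (a b : ∀ i, X i) :
    rRefl (redRel (U : Filter I) ρ) (mk a) (mk b) ↔ ∀ᶠ i in U, rRefl (ρ i) (a i) (b i) :=
  (or_congr Iff.rfl Quotient.eq).trans Ultrafilter.eventually_or.symm

lemma rStep_redRel_mk_iff (e : Bool) (a b : ∀ i, X i) :
    rStep (redRel (U : Filter I) ρ) e (mk a) (mk b) ↔ ∀ᶠ i in U, rStep (ρ i) e (a i) (b i) := by
  cases e
  · exact rRefl_redRel_mk_iff U ρ a b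
  · exact rRefl_redRel_mk_iff U ρ b a

/-- Łoś's theorem for paths of a fixed shape. -/
lemma isPath_redRel_mk_iff {m : ℕ} (w : Fin m → ∀ i, X i) (ε : Fin (m + 1) → Bool)
    (x y : ∀ i, X i) :
    IsPath (redRel (U : Filter I) ρ) (fun j => mk (w j)) ε (mk x) (mk y) ↔
      ∀ᶠ i in U, IsPath (ρ i) (fun j => w j i) ε (x i) (y i) := by
  have hmk : pathPts (mk x) (mk y) (fun j => mk (w j)) = mk ∘ pathPts x y w :=
    (pathPts_comp _ x y w).symm
  have heval : ∀ i t, pathPts x y w t i = pathPts (x i) (y i) (fun j => w j i) t :=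
    fun i t => congrFun (pathPts_comp (fun v : ∀ i, X i => v i) x y w) t
  simp only [IsPath, hmk, Function.comp_apply, rStep_redRel_mk_iff, heval]
  exact eventually_all.symm

lemma dLE_redRel_linRel_mk_iff (n : ℕ) (x y : I → ℕ) :
    dLE (redRel (U : Filter I) fun _ => linRel) n
        (Quotient.mk (redSetoid (U : Filter I) fun _ => ℕ) x) (Quotient.mk _ y) ↔
      ∀ᶠ i in U, Nat.dist (x i) (y i) ≤ n + 1 := by
  constructor
  · rintro ⟨m, hm, z, ε, hpath⟩
    have hz : z = fun j => Quotient.mk _ (z j).out := funext fun j => (Quotient.out_eq _).symm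
    rw [hz, isPath_redRel_mk_iff] at hpath
    filter_upwards [hpath] with i hi
    exact (natDist_le_of_isPath_linRel hi).trans (by omega)
  · intro h
    refine ⟨n, le_rfl, fun j => Quotient.mk _ fun i => walkTowards (x i) (y i) (j + 1),
      fun _ => false, ?_⟩
    rw [isPath_redRel_mk_iff]
    filter_upwards [h] with i hi using isPath_linRel_walkTowards hi

lemma conn_redRel_linRel_iff :
    Conn (redRel (U : Filter I) fun _ => linRel) ↔ ∀ x : I → ℕ, ∃ n, ∀ᶠ i in U, x i ≤ n := by
  constructor
  · intro h x
    obtain ⟨n, hn⟩ := h (Quotient.mk _ x) (Quotient.mk _ fun _ => 0)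
    rw [dLE_redRel_linRel_mk_iff] at hn
    exact ⟨n + 1, by simpa only [Nat.dist_zero_right] using hn⟩
  · intro h X Y
    induction X, Y using Quotient.inductionOn₂ with
    | _ x y =>
      obtain ⟨n, hn⟩ := h fun i => Nat.dist (x i) (y i)
      exact ⟨n, (dLE_redRel_linRel_mk_iff U n x y).2 (hn.mono fun i hi => by omega)⟩

end Ultrapower

section Completeness

variable {α β : Type*}

lemma omegaComplete_iff_forall_exists_eventually_le (U : Ultrafilter α) :
    OmegaComplete U ↔ ∀ x : α → ℕ, ∃ n, ∀ᶠ i in U, x i ≤ n := by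
  classical
  constructor
  · intro hU x
    by_contra! hunbdd
    obtain ⟨i, hi⟩ := Ultrafilter.nonempty_of_mem (hU _ hunbdd)
    exact lt_irrefl (x i) (Set.mem_iInter.1 hi (x i))
  · intro h f hf
    -- `x i` is the first stage at which `i` drops out of the sequence `f`.
    let x : α → ℕ := fun i => if hi : ∃ n, i ∉ f n then Nat.find hi else 0
    obtain ⟨N, hN⟩ := h x
    have hinit : ∀ᶠ i in U, ∀ k ∈ Set.Iic N, i ∈ f k :=
      (eventually_all_finite (Set.finite_Iic N)).2 fun k _ => hf k
    filter_upwards [hN, hinit] with i hxi hi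
    refine Set.mem_iInter.2 fun n => by_contra fun hn => ?_
    have hex : ∃ n, i ∉ f n := ⟨n, hn⟩
    have hx : x i = Nat.find hex := dif_pos hex
    exact Nat.find_spec hex (hi _ (hx ▸ hxi : Nat.find hex ≤ N))

lemma NonPrincipal.map {U : Ultrafilter α} (hU : NonPrincipal U) {f : α → β}
    (hf : Function.Injective f) : NonPrincipal (U.map f) := by
  intro b hb
  rw [Ultrafilter.mem_map] at hb
  obtain ⟨a, rfl⟩ := Ultrafilter.nonempty_of_mem hb
  have hfiber : f ⁻¹' {f a} = {a} := Set.ext fun _ => hf.eq_iff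
  exact hU a (hfiber ▸ hb)

lemma OmegaComplete.map {U : Ultrafilter α} (hU : OmegaComplete U) (f : α → β) :
    OmegaComplete (U.map f) := by
  intro s hs
  rw [Ultrafilter.mem_map, Set.preimage_iInter]
  exact hU _ hs

lemma noMeasurableLE_iff (I : Type*) :
    NoMeasurableLE I ↔ ∀ U : Ultrafilter I, NonPrincipal U → ¬ OmegaComplete U := by
  constructor
  · intro h U hNP hOC
    let e : I ≃ (Set.univ : Set I) := (Equiv.Set.univ I).symm
    exact h Set.univ (U.map e) ⟨hNP.map e.injective, hOC.map e⟩
  · rintro h J U ⟨hNP, hOC⟩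
    exact h (U.map Subtype.val) (hNP.map Subtype.val_injective) (hOC.map Subtype.val)

end Completeness

theorem stmt_14_general {I : Type*} :
    NoMeasurableLE I ↔
      ∀ U : Ultrafilter I, NonPrincipal U →
        ¬ Conn (redRel (U : Filter I) (fun _ : I => linRel)) := by
  rw [noMeasurableLE_iff]
  refine forall_congr' fun U => ?_
  rw [conn_redRel_linRel_iff, omegaComplete_iff_forall_exists_eventually_le]

theorem stmt_14 {I : Type*} [Infinite I] :
    NoMeasurableLE I ↔
      ∀ U : Ultrafilter I, NonPrincipal U →
        ¬ Conn (redRel (U : Filter I) (fun _ : I => linRel)) :=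
  stmt_14_general
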